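/- arXiv:1702.00857 — 4 statements merged into one kernel-verified Lean document; each statement's English description precedes it below -/
import Mathlib

section
/- Under Assumption A1 at y0 and for any discount factor α ∈ (0,1), the infimum in the discounted optimal control problem V_α(y0) := inf over admissible processes (y(·),u(·)) from y0 of Σ_{t=0}^∞ α^t g(y(t),u(t)) is attained: there exists an admissible process (ȳ(·),ū(·)) from y0 with Σ_{t=0}^∞ α^t g(ȳ(t),ū(t)) = V_α(y0). -/
/-!
The admissible processes from `y0` form a closed subset of the product
`(ℕ → Y) × (ℕ → U0)`: the dynamics and the initial condition are closed conditions by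
continuity of `f`, and `u(t) ∈ U(y(t))` is closed because an upper semicontinuous
compact-valued map has closed graph. By Tychonoff this set is compact. The discounted cost
is a uniformly convergent series (Weierstrass M-test with `|g| ≤ M` on `Y × U0`), hence
continuous on it, so it attains its infimum.
-/

open MeasureTheory Filter Topology Set ENNReal

noncomputable section

namespace LPOC

/-- The state space `ℝ^m`. -/
abbrev E (m : ℕ) := EuclideanSpace ℝ (Fin m)

variable {m : ℕ} {U0 : Type*} [MetricSpace U0]

/-- Upper semicontinuity of a compact-valued set-valued map at points of `Y`. -/
def UscOn (Y : Set (E m)) (A : E m → Set U0) : Prop :=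
  ∀ y ∈ Y, ∀ V : Set U0, IsOpen V → A y ⊆ V →
    ∃ O : Set (E m), IsOpen O ∧ y ∈ O ∧ ∀ y' ∈ O ∩ Y, A y' ⊆ V

/-- `A(y) := {u ∈ U(y) : f(y,u) ∈ Y}`. -/
def Amap (Y : Set (E m)) (U : E m → Set U0) (f : E m × U0 → E m) (y : E m) : Set U0 :=
  {u ∈ U y | f (y, u) ∈ Y}

/-- `G := {(y,u) : y ∈ Y, u ∈ U(y), f(y,u) ∈ Y}`, the graph of `A`. -/
def graphG (Y : Set (E m)) (U : E m → Set U0) (f : E m × U0 → E m) : Set (E m × U0) :=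
  {p | p.1 ∈ Y ∧ p.2 ∈ U p.1 ∧ f p ∈ Y}

/-- An admissible process `(y(·),u(·))` from `y0` on the infinite horizon. -/
def AdmProc (Y : Set (E m)) (U : E m → Set U0) (f : E m × U0 → E m)
    (y0 : E m) (y : ℕ → E m) (u : ℕ → U0) : Prop :=
  y 0 = y0 ∧ ∀ t : ℕ, y (t + 1) = f (y t, u t) ∧ y t ∈ Y ∧ u t ∈ U (y t)

/-- An admissible process from `y0` on the finite horizon `{0, ..., S-1}`. -/
def AdmProcH (Y : Set (E m)) (U : E m → Set U0) (f : E m × U0 → E m)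
    (S : ℕ) (y0 : E m) (y : ℕ → E m) (u : ℕ → U0) : Prop :=
  y 0 = y0 ∧ (∀ t < S, y (t + 1) = f (y t, u t) ∧ y t ∈ Y ∧ u t ∈ U (y t)) ∧ y S ∈ Y

/-- The discounted cost `Σ_{t=0}^∞ α^t g(y(t),u(t))`. -/
def discountedCost (g : E m × U0 → ℝ) (α : ℝ) (y : ℕ → E m) (u : ℕ → U0) : ℝ :=
  ∑' t : ℕ, α ^ t * g (y t, u t)

/-- The discounted value function `V_α` (real-valued version). -/
def Valpha (Y : Set (E m)) (U : E m → Set U0) (f : E m × U0 → E m) (g : E m × U0 → ℝ)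
    (α : ℝ) (y0 : E m) : ℝ :=
  sInf {r : ℝ | ∃ y u, AdmProc Y U f y0 y u ∧ r = discountedCost g α y u}

/-- The discounted value function `V_α` with values in `ℝ ∪ {±∞}` (equal to `+∞` when no
admissible process exists). -/
def ValphaE (Y : Set (E m)) (U : E m → Set U0) (f : E m × U0 → E m) (g : E m × U0 → ℝ)
    (α : ℝ) (y0 : E m) : EReal :=
  sInf {r : EReal | ∃ y u, AdmProc Y U f y0 y u ∧ r = ((discountedCost g α y u : ℝ) : EReal)}

/-- The finite-horizon value function `V(S, y0)`. -/
def Vfin (Y : Set (E m)) (U : E m → Set U0) (f : E m × U0 → E m) (g : E m × U0 → ℝ)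
    (S : ℕ) (y0 : E m) : ℝ :=
  sInf {r : ℝ | ∃ y u, AdmProcH Y U f S y0 y u ∧ r = ∑ t ∈ Finset.range S, g (y t, u t)}

variable [MeasurableSpace U0] [BorelSpace U0]

/-- The discounted occupational measure `γ^α` generated by a process, i.e. the measure with
`γ^α(Q) = (1-α) Σ_{t=0}^∞ α^t 1_Q(y(t),u(t))`. -/
def discOcc (α : ℝ) (y : ℕ → E m) (u : ℕ → U0) : Measure (E m × U0) :=
  Measure.sum fun t : ℕ => (ENNReal.ofReal ((1 - α) * α ^ t)) • Measure.dirac (y t, u t)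

/-- The occupational measure over `{0,...,S-1}` generated by a process, i.e. the measure with
`γ_S(Q) = (1/S) Σ_{t=0}^{S-1} 1_Q(y(t),u(t))`. -/
def occS (S : ℕ) (y : ℕ → E m) (u : ℕ → U0) : Measure (E m × U0) :=
  ((S : ℝ≥0∞))⁻¹ • ∑ t ∈ Finset.range S, Measure.dirac (y t, u t)

/-- `Γ_α(y0)`: the set of discounted occupational measures of admissible processes from `y0`. -/
def GammaA (Y : Set (E m)) (U : E m → Set U0) (f : E m × U0 → E m) (α : ℝ) (y0 : E m) :
    Set (ProbabilityMeasure (E m × U0)) :=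
  {γ | ∃ y u, AdmProc Y U f y0 y u ∧ (γ : Measure (E m × U0)) = discOcc α y u}

/-- `Γ_α := ∪_{y0 ∈ Y} Γ_α(y0)`. -/
def GammaAall (Y : Set (E m)) (U : E m → Set U0) (f : E m × U0 → E m) (α : ℝ) :
    Set (ProbabilityMeasure (E m × U0)) :=
  ⋃ y0 ∈ Y, GammaA Y U f α y0

/-- `Γ(S)`: the set of occupational measures over `{0,...,S-1}` of admissible processes on
horizon `S`, over all initial conditions in `Y`. -/
def GammaSset (Y : Set (E m)) (U : E m → Set U0) (f : E m × U0 → E m) (S : ℕ) :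
    Set (ProbabilityMeasure (E m × U0)) :=
  {γ | ∃ y0 ∈ Y, ∃ y u, AdmProcH Y U f S y0 y u ∧ (γ : Measure (E m × U0)) = occS S y u}

/-- `W_α(y0)`: probability measures `γ` concentrated on `G` such that
`∫_G [α(φ(f(y,u))-φ(y)) + (1-α)(φ(y0)-φ(y))] dγ = 0` for all continuous `φ : Y → ℝ`. -/
def Wa (Y : Set (E m)) (U : E m → Set U0) (f : E m × U0 → E m) (α : ℝ) (y0 : E m) :
    Set (ProbabilityMeasure (E m × U0)) :=
  {γ | (γ : Measure (E m × U0)) (graphG Y U f)ᶜ = 0 ∧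
    ∀ φ : E m → ℝ, ContinuousOn φ Y →
      ∫ p, (α * (φ (f p) - φ p.1) + (1 - α) * (φ y0 - φ p.1))
        ∂(γ : Measure (E m × U0)) = 0}

/-- `W`: probability measures `γ` concentrated on `G` such that
`∫_G (φ(f(y,u))-φ(y)) dγ = 0` for all continuous `φ : Y → ℝ`. -/
def Wset (Y : Set (E m)) (U : E m → Set U0) (f : E m × U0 → E m) :
    Set (ProbabilityMeasure (E m × U0)) :=
  {γ | (γ : Measure (E m × U0)) (graphG Y U f)ᶜ = 0 ∧
    ∀ φ : E m → ℝ, ContinuousOn φ Y →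
      ∫ p, (φ (f p) - φ p.1) ∂(γ : Measure (E m × U0)) = 0}

/-- `g*_α(y0)`: the optimal value of the IDLP problem over `W_α(y0)`. -/
def gStarA (Y : Set (E m)) (U : E m → Set U0) (f : E m × U0 → E m) (g : E m × U0 → ℝ)
    (α : ℝ) (y0 : E m) : ℝ :=
  sInf {r : ℝ | ∃ γ ∈ Wa Y U f α y0, r = ∫ p, g p ∂(γ : Measure (E m × U0))}

/-- `g*`: the optimal value of the IDLP problem over `W`. -/
def gStar (Y : Set (E m)) (U : E m → Set U0) (f : E m × U0 → E m) (g : E m × U0 → ℝ) : ℝ :=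
  sInf {r : ℝ | ∃ γ ∈ Wset Y U f, r = ∫ p, g p ∂(γ : Measure (E m × U0))}

/-- Membership in the class `LS` of bounded lower semicontinuous functions `Y → ℝ`. -/
def BddLscOn (Y : Set (E m)) (ψ : E m → ℝ) : Prop :=
  LowerSemicontinuousOn ψ Y ∧ ∃ C : ℝ, ∀ y ∈ Y, |ψ y| ≤ C

/-- The inner infimum in the max-min problem (discounted case):
`inf_{(y,u) ∈ G} { g(y,u) + α(ψ(f(y,u))-ψ(y)) + (1-α)(ψ(y0)-ψ(y)) }`. -/
def muA (Y : Set (E m)) (U : E m → Set U0) (f : E m × U0 → E m) (g : E m × U0 → ℝ)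
    (α : ℝ) (y0 : E m) (ψ : E m → ℝ) : ℝ :=
  sInf {s : ℝ | ∃ p ∈ graphG Y U f,
    s = g p + α * (ψ (f p) - ψ p.1) + (1 - α) * (ψ y0 - ψ p.1)}

/-- `μ*_α(y0) := sup_{ψ ∈ LS} inf_{(y,u) ∈ G} {...}`. -/
def muStarA (Y : Set (E m)) (U : E m → Set U0) (f : E m × U0 → E m) (g : E m × U0 → ℝ)
    (α : ℝ) (y0 : E m) : ℝ :=
  sSup {r : ℝ | ∃ ψ : E m → ℝ, BddLscOn Y ψ ∧ r = muA Y U f g α y0 ψ}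

/-- The inner infimum in the max-min problem (average case):
`inf_{(y,u) ∈ G} { g(y,u) + ψ(f(y,u)) - ψ(y) }`. -/
def muBar (Y : Set (E m)) (U : E m → Set U0) (f : E m × U0 → E m) (g : E m × U0 → ℝ)
    (ψ : E m → ℝ) : ℝ :=
  sInf {s : ℝ | ∃ p ∈ graphG Y U f, s = g p + ψ (f p) - ψ p.1}

/-- `μ* := sup_{ψ ∈ LS} inf_{(y,u) ∈ G} { g(y,u) + ψ(f(y,u)) - ψ(y) }`. -/
def muStar (Y : Set (E m)) (U : E m → Set U0) (f : E m × U0 → E m) (g : E m × U0 → ℝ) : ℝ :=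
  sSup {r : ℝ | ∃ ψ : E m → ℝ, BddLscOn Y ψ ∧ r = muBar Y U f g ψ}

/-- The convex hull of a set of probability measures: all finite convex combinations. -/
def convCombos {X : Type*} [MeasurableSpace X] (Γ : Set (ProbabilityMeasure X)) :
    Set (ProbabilityMeasure X) :=
  {γ | ∃ (n : ℕ) (w : Fin n → ℝ) (μs : Fin n → ProbabilityMeasure X),
    (∀ i, 0 ≤ w i) ∧ (∑ i, w i) = 1 ∧ (∀ i, μs i ∈ Γ) ∧
    (γ : Measure X) = ∑ i, ENNReal.ofReal (w i) • (μs i : Measure X)}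

end LPOC

namespace LPOC

variable {m : ℕ} {U0 : Type*}

def admissibleSet (Y : Set (E m)) (U : E m → Set U0) (f : E m × U0 → E m) (y0 : E m) :
    Set ((ℕ → E m) × (ℕ → U0)) :=
  {p | AdmProc Y U f y0 p.1 p.2}

theorem valpha_eq_sInf_image (Y : Set (E m)) (U : E m → Set U0) (f : E m × U0 → E m)
    (g : E m × U0 → ℝ) (α : ℝ) (y0 : E m) :
    Valpha Y U f g α y0 =
      sInf ((fun p => discountedCost g α p.1 p.2) '' admissibleSet Y U f y0) := by
  simp only [Valpha, admissibleSet]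
  congr 1
  ext r
  simp [eq_comm]

section

variable [TopologicalSpace U0]

theorem continuous_eval_pair (t : ℕ) :
    Continuous fun p : (ℕ → E m) × (ℕ → U0) => (p.1 t, p.2 t) :=
  ((continuous_apply t).comp continuous_fst).prodMk ((continuous_apply t).comp continuous_snd)

theorem isClosed_admissibleSet {Y : Set (E m)} {U : E m → Set U0} {f : E m × U0 → E m}
    (hf : Continuous f) (hG : IsClosed {p : E m × U0 | p.1 ∈ Y ∧ p.2 ∈ U p.1}) (y0 : E m) :
    IsClosed (admissibleSet Y U f y0) := by
  have hK : admissibleSet Y U f y0 = {p | p.1 0 = y0} ∩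
      ⋂ t : ℕ, ({p | p.1 (t + 1) = f (p.1 t, p.2 t)} ∩
        (fun p => (p.1 t, p.2 t)) ⁻¹' {q : E m × U0 | q.1 ∈ Y ∧ q.2 ∈ U q.1}) := by
    ext p
    simp [admissibleSet, AdmProc]
  rw [hK]
  refine (isClosed_eq ((continuous_apply 0).comp continuous_fst) continuous_const).inter
    (isClosed_iInter fun t => (isClosed_eq ?_ (hf.comp (continuous_eval_pair t))).inter
      (hG.preimage (continuous_eval_pair t)))
  exact (continuous_apply (t + 1)).comp continuous_fst

theorem isCompact_admissibleSet [CompactSpace U0] {Y : Set (E m)} {U : E m → Set U0}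
    {f : E m × U0 → E m} (hY : IsCompact Y) (hf : Continuous f)
    (hG : IsClosed {p : E m × U0 | p.1 ∈ Y ∧ p.2 ∈ U p.1}) (y0 : E m) :
    IsCompact (admissibleSet Y U f y0) := by
  refine ((isCompact_univ_pi fun _ => hY).prod isCompact_univ).of_isClosed_subset
    (isClosed_admissibleSet hf hG y0) ?_
  rintro ⟨y, u⟩ ⟨-, hadm⟩
  exact ⟨fun t _ => (hadm t).2.1, trivial⟩

theorem continuousOn_discountedCost [CompactSpace U0] {Y : Set (E m)} (hY : IsCompact Y)
    {g : E m × U0 → ℝ} (hg : Continuous g) {α : ℝ} (hα : |α| < 1) :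
    ContinuousOn (fun p : (ℕ → E m) × (ℕ → U0) => discountedCost g α p.1 p.2)
      {p | ∀ t, p.1 t ∈ Y} := by
  obtain ⟨M, hM⟩ := (hY.prod isCompact_univ).exists_bound_of_continuousOn hg.continuousOn
  rw [continuousOn_iff_continuous_domRestrict]
  refine continuous_tsum (u := fun t => |α| ^ t * M)
    (fun t => continuous_const.mul
      ((hg.comp (continuous_eval_pair t)).comp continuous_subtype_val))
    ((summable_geometric_of_lt_one (abs_nonneg α) hα).mul_right M) fun t p => ?_
  rw [norm_mul, norm_pow, Real.norm_eq_abs]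
  exact mul_le_mul_of_nonneg_left (hM _ ⟨p.2 t, mem_univ _⟩) (by positivity)

end

theorem isClosed_graph_of_uscOn [MetricSpace U0] {Y : Set (E m)} (hY : IsClosed Y)
    {U : E m → Set U0} (hUusc : UscOn Y U) (hUcomp : ∀ y ∈ Y, IsCompact (U y)) :
    IsClosed {p : E m × U0 | p.1 ∈ Y ∧ p.2 ∈ U p.1} := by
  refine isOpen_compl_iff.mp (isOpen_iff_mem_nhds.mpr ?_)
  rintro ⟨y, v⟩ hyv
  by_cases hy : y ∈ Y
  · have hv : v ∉ U y := fun hv => hyv ⟨hy, hv⟩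
    obtain ⟨V, W, hV, hW, hUV, hvW, hVW⟩ :=
      SeparatedNhds.of_isCompact_isClosed (hUcomp y hy) isClosed_singleton
        (disjoint_singleton_right.mpr hv)
    obtain ⟨O, hO, hyO, hOV⟩ := hUusc y hy V hV hUV
    filter_upwards [prod_mem_nhds (hO.mem_nhds hyO) (hW.mem_nhds (hvW rfl))]
    rintro ⟨y', v'⟩ ⟨hy'O, hv'W⟩ ⟨hy'Y, hv'U⟩
    exact hVW.ne_of_mem (hOV y' ⟨hy'O, hy'Y⟩ hv'U) hv'W rfl
  · filter_upwards [prod_mem_nhds (hY.isOpen_compl.mem_nhds hy) univ_mem]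
    exact fun q hq hq' => hq.1 hq'.1

theorem stmt0_general {m : ℕ} {U0 : Type*} [MetricSpace U0] [CompactSpace U0]
    (Y : Set (E m)) (hYc : IsCompact Y)
    (U : E m → Set U0) (hUusc : UscOn Y U) (hUcomp : ∀ y ∈ Y, IsCompact (U y))
    (f : E m × U0 → E m) (hf : Continuous f)
    (g : E m × U0 → ℝ) (hg : Continuous g)
    (α : ℝ) (hα : α ∈ Set.Ioo (0:ℝ) 1)
    (y0 : E m)
    (hA1 : ∃ y u, AdmProc Y U f y0 y u) :
    ∃ ybar ubar, AdmProc Y U f y0 ybar ubar ∧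
      discountedCost g α ybar ubar = Valpha Y U f g α y0 := by
  set K := admissibleSet Y U f y0
  set F := fun p : (ℕ → E m) × (ℕ → U0) => discountedCost g α p.1 p.2
  have hK : IsCompact K :=
    isCompact_admissibleSet hYc hf (isClosed_graph_of_uscOn hYc.isClosed hUusc hUcomp) y0
  have hF : ContinuousOn F K :=
    (continuousOn_discountedCost hYc hg (abs_lt.mpr ⟨by linarith [hα.1], hα.2⟩)).mono
      fun p hp t => (hp.2 t).2.1
  obtain ⟨y, u, hadm⟩ := hA1
  obtain ⟨⟨ybar, ubar⟩, hbar, hmin⟩ :=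
    (hK.image_of_continuousOn hF).sInf_mem (Set.image_nonempty.mpr ⟨(y, u), hadm⟩)
  exact ⟨ybar, ubar, hbar, valpha_eq_sInf_image Y U f g α y0 ▸ hmin⟩

theorem stmt0 {m : ℕ} {U0 : Type*} [MetricSpace U0] [CompactSpace U0]
    [MeasurableSpace U0] [BorelSpace U0]
    (Y : Set (E m)) (hYne : Y.Nonempty) (hYc : IsCompact Y)
    (U : E m → Set U0) (hUusc : UscOn Y U) (hUcomp : ∀ y ∈ Y, IsCompact (U y))
    (f : E m × U0 → E m) (hf : Continuous f)
    (g : E m × U0 → ℝ) (hg : Continuous g)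
    (α : ℝ) (hα : α ∈ Set.Ioo (0:ℝ) 1)
    (y0 : E m) (hy0 : y0 ∈ Y)
    (hA1 : ∃ y u, AdmProc Y U f y0 y u) :
    ∃ ybar ubar, AdmProc Y U f y0 ybar ubar ∧
      discountedCost g α ybar ubar = Valpha Y U f g α y0 :=
  stmt0_general Y hYc U hUusc hUcomp f hf g hg α hα y0 hA1

end LPOC
end
end

section
/- Under Assumption A1 at every point of the set where it is finite, the discounted value function V_α : Y → ℝ ∪ {+∞}, V_α(y) := inf over admissible processes from y of Σ_{t=0}^∞ α^t g(y(t),u(t)) (with α ∈ (0,1)), is lower semicontinuous on Y. -/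
/-!
An admissible process from `y₀` is a trajectory `t ↦ (y t, u t)` in the compact set
`(Y × U₀)^ℕ`, and the pairs `(y₀, trajectory)` form a closed relation, because `f` is continuous
and the graph of the upper semicontinuous map `U` is closed. Since `|α| < 1` and `g` is bounded on
`Y × U₀`, the discounted cost is continuous on `(Y × U₀)^ℕ`. `V_α` is therefore the marginal
function of a continuous cost over the fibres of a closed relation with compact range, and such a
function is lower semicontinuous: the infimum over a nonempty fibre is attained, so its sublevel
sets are projections of closed sets along a compact factor.
-/

open MeasureTheory Filter Topology Set ENNReal

noncomputable section

namespace LPOC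

variable {m : ℕ} {U0 : Type*} [MetricSpace U0]

variable [MeasurableSpace U0] [BorelSpace U0]

section Marginal

variable {X Z : Type*} [TopologicalSpace X] [TopologicalSpace Z]

theorem isClosed_image_fst_of_subset_isCompact {K : Set Z} (hK : IsCompact K)
    {R : Set (X × Z)} (hR : IsClosed R) (hRK : ∀ p ∈ R, p.2 ∈ K) :
    IsClosed (Prod.fst '' R) := by
  have := isCompact_iff_compactSpace.1 hK
  have hR' : Prod.fst '' R = Prod.fst '' (Prod.map id (↑) ⁻¹' R : Set (X × K)) := by
    ext x
    constructor
    · rintro ⟨p, hp, rfl⟩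
      exact ⟨(p.1, ⟨p.2, hRK p hp⟩), hp, rfl⟩
    · rintro ⟨p, hp, rfl⟩
      exact ⟨_, hp, rfl⟩
  rw [hR']
  exact isClosedMap_fst_of_compactSpace _ (hR.preimage (continuous_id.prodMap continuous_subtype_val))

variable {K : Set Z} {R : Set (X × Z)} {J : Z → ℝ}

theorem exists_sInf_image_fiber_eq (hK : IsCompact K) (hR : IsClosed R)
    (hRK : ∀ p ∈ R, p.2 ∈ K) (hJ : ContinuousOn J K) {x : X} (hx : ∃ z, (x, z) ∈ R) :
    ∃ z, (x, z) ∈ R ∧ sInf ((fun z => (J z : EReal)) '' {z | (x, z) ∈ R}) = J z := by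
  have hfib : IsCompact {z | (x, z) ∈ R} :=
    hK.of_isClosed_subset (hR.preimage (Continuous.prodMk_right x)) fun z hz => hRK _ hz
  obtain ⟨z, hz, hmin⟩ := hfib.exists_isMinOn hx
    (continuous_coe_real_ereal.comp_continuousOn (hJ.mono fun z hz => hRK _ hz))
  refine ⟨z, hz, IsLeast.csInf_eq ⟨mem_image_of_mem _ hz, ?_⟩⟩
  rintro _ ⟨z', hz', rfl⟩
  exact hmin hz'

/-- Berge's theorem on marginal functions, for a closed relation with compact range. -/
theorem lowerSemicontinuous_sInf_image_fiber (hK : IsCompact K) (hR : IsClosed R)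
    (hRK : ∀ p ∈ R, p.2 ∈ K) (hJ : ContinuousOn J K) :
    LowerSemicontinuous fun x => sInf ((fun z => (J z : EReal)) '' {z | (x, z) ∈ R}) := by
  rw [lowerSemicontinuous_iff_isClosed_preimage]
  intro c
  rcases eq_or_ne c ⊤ with rfl | hc
  · simp
  have hsub : (fun x => sInf ((fun z => (J z : EReal)) '' {z | (x, z) ∈ R})) ⁻¹' Iic c =
      Prod.fst '' (R ∩ (fun p => (J p.2 : EReal)) ⁻¹' Iic c) := by
    ext x
    constructor
    · intro hxc
      by_cases hx : ∃ z, (x, z) ∈ R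
      · obtain ⟨z, hz, hxz⟩ := exists_sInf_image_fiber_eq hK hR hRK hJ hx
        exact ⟨(x, z), ⟨hz, (hxz ▸ hxc : ((J z : ℝ) : EReal) ≤ c)⟩, rfl⟩
      · have hempty : {z | (x, z) ∈ R} = ∅ :=
          eq_empty_iff_forall_notMem.2 fun z hz => hx ⟨z, hz⟩
        rw [mem_preimage, hempty, image_empty, sInf_empty, mem_Iic, top_le_iff] at hxc
        exact absurd hxc hc
    · rintro ⟨⟨x, z⟩, ⟨hz, hzc⟩, rfl⟩
      exact (sInf_le (mem_image_of_mem (fun z => (J z : EReal)) hz)).trans hzc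
  rw [hsub]
  refine isClosed_image_fst_of_subset_isCompact hK ?_ fun p hp => hRK p hp.1
  refine ContinuousOn.preimage_isClosed_of_isClosed ?_ hR isClosed_Iic
  exact continuous_coe_real_ereal.comp_continuousOn
    (hJ.comp continuous_snd.continuousOn fun p hp => hRK p hp)

end Marginal

theorem continuousOn_tsum_pow_mul_apply {P : Type*} [TopologicalSpace P] {S : Set P}
    {g : P → ℝ} (hg : ContinuousOn g S) {M : ℝ} (hM : ∀ p ∈ S, ‖g p‖ ≤ M)
    {α : ℝ} (hα : ‖α‖ < 1) :
    ContinuousOn (fun w : ℕ → P => ∑' t, α ^ t * g (w t)) (univ.pi fun _ => S) := by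
  refine continuousOn_tsum (u := fun t => ‖α‖ ^ t * M) (fun t => ?_)
    ((summable_geometric_of_lt_one (norm_nonneg α) hα).mul_right M) (fun t w hw => ?_)
  · exact continuousOn_const.mul
      (hg.comp (continuous_apply t).continuousOn fun w hw => hw t (mem_univ t))
  · rw [norm_mul, norm_pow]
    exact mul_le_mul_of_nonneg_left (hM _ (hw t (mem_univ t))) (by positivity)

theorem UscOn.isClosed_graph {m : ℕ} {U0 : Type*} [MetricSpace U0]
    {Y : Set (E m)} (hY : IsClosed Y) {U : E m → Set U0} (hUusc : UscOn Y U)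
    (hUcomp : ∀ y ∈ Y, IsCompact (U y)) :
    IsClosed {p : E m × U0 | p.1 ∈ Y ∧ p.2 ∈ U p.1} := by
  rw [← isOpen_compl_iff, isOpen_iff_mem_nhds]
  rintro ⟨y, u⟩ hp
  by_cases hy : y ∈ Y
  swap
  · filter_upwards [continuous_fst.continuousAt.preimage_mem_nhds (hY.isOpen_compl.mem_nhds hy)]
      with q hq hqG using hq hqG.1
  have hu : u ∉ U y := fun hu => hp ⟨hy, hu⟩
  obtain ⟨V, hV, W, hW, hVW⟩ :=
    Filter.disjoint_iff.1 ((hUcomp y hy).disjoint_nhdsSet_nhds hu)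
  obtain ⟨V', hV'open, hUV', hV'V⟩ := mem_nhdsSet_iff_exists.1 hV
  obtain ⟨O, hO, hyO, hOV⟩ := hUusc y hy V' hV'open hUV'
  filter_upwards [prod_mem_nhds (hO.mem_nhds hyO) hW] with q hq hqG
  exact Set.disjoint_left.1 hVW (hV'V (hOV q.1 ⟨hq.1, hqG.1⟩ hqG.2)) hq.2

/-- Admissible processes `(y, u)` from `y0`, encoded as pairs `(y0, t ↦ (y t, u t))`. -/
def admissibleRel {m : ℕ} {U0 : Type*} [MetricSpace U0] (Y : Set (E m)) (U : E m → Set U0)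
    (f : E m × U0 → E m) : Set (E m × (ℕ → E m × U0)) :=
  {p | AdmProc Y U f p.1 (fun t => (p.2 t).1) (fun t => (p.2 t).2)}

section Admissible

variable {m : ℕ} {U0 : Type*} [MetricSpace U0] {Y : Set (E m)} {U : E m → Set U0}
  {f : E m × U0 → E m}

theorem isClosed_admissibleRel (hY : IsClosed Y) (hUusc : UscOn Y U)
    (hUcomp : ∀ y ∈ Y, IsCompact (U y)) (hf : Continuous f) :
    IsClosed (admissibleRel Y U f) := by
  have hrel : admissibleRel Y U f = {p | (p.2 0).1 = p.1} ∩
      ⋂ t, ({p | (p.2 (t + 1)).1 = f (p.2 t)} ∩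
        (fun p => p.2 t) ⁻¹' {q | q.1 ∈ Y ∧ q.2 ∈ U q.1}) := by
    ext p
    simp only [mem_inter_iff, mem_iInter]
    rfl
  rw [hrel]
  exact (isClosed_eq (by fun_prop) (by fun_prop)).inter <| isClosed_iInter fun t =>
    (isClosed_eq (by fun_prop) (hf.comp (by fun_prop))).inter
      ((hUusc.isClosed_graph hY hUcomp).preimage (by fun_prop))

theorem admissibleRel_snd_mem {p : E m × (ℕ → E m × U0)} (hp : p ∈ admissibleRel Y U f) :
    p.2 ∈ univ.pi fun _ => Y ×ˢ (univ : Set U0) :=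
  fun t _ => ⟨(hp.2 t).2.1, mem_univ _⟩

theorem valphaE_eq_sInf_image (g : E m × U0 → ℝ) (α : ℝ) (y0 : E m) :
    ValphaE Y U f g α y0 = sInf ((fun w : ℕ → E m × U0 => ((∑' t, α ^ t * g (w t) : ℝ) : EReal)) ''
      {w | (y0, w) ∈ admissibleRel Y U f}) := by
  rw [ValphaE]
  congr 1
  ext r
  constructor
  · rintro ⟨y, u, hadm, rfl⟩
    exact ⟨fun t => (y t, u t), hadm, rfl⟩
  · rintro ⟨w, hw, rfl⟩
    exact ⟨fun t => (w t).1, fun t => (w t).2, hw, rfl⟩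

end Admissible

theorem stmt1_general {m : ℕ} {U0 : Type*} [MetricSpace U0] [CompactSpace U0]
    (Y : Set (E m)) (hYc : IsCompact Y)
    (U : E m → Set U0) (hUusc : UscOn Y U) (hUcomp : ∀ y ∈ Y, IsCompact (U y))
    (f : E m × U0 → E m) (hf : Continuous f)
    (g : E m × U0 → ℝ) (hg : Continuous g)
    (α : ℝ) (hα : α ∈ Set.Ioo (0:ℝ) 1) :
    LowerSemicontinuousOn (fun y => ValphaE Y U f g α y) Y := by
  have hYU : IsCompact (Y ×ˢ (univ : Set U0)) := hYc.prod isCompact_univ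
  obtain ⟨M, hM⟩ := hYU.exists_bound_of_continuousOn hg.continuousOn
  have hαnorm : ‖α‖ < 1 := by rw [Real.norm_of_nonneg hα.1.le]; exact hα.2
  have hlsc := lowerSemicontinuous_sInf_image_fiber (isCompact_univ_pi fun _ => hYU)
    (isClosed_admissibleRel hYc.isClosed hUusc hUcomp hf) (fun _ => admissibleRel_snd_mem)
    (continuousOn_tsum_pow_mul_apply hg.continuousOn hM hαnorm)
  simp only [← valphaE_eq_sInf_image] at hlsc
  exact hlsc.lowerSemicontinuousOn Y

theorem stmt1 {m : ℕ} {U0 : Type*} [MetricSpace U0] [CompactSpace U0]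
    [MeasurableSpace U0] [BorelSpace U0]
    (Y : Set (E m)) (hYne : Y.Nonempty) (hYc : IsCompact Y)
    (U : E m → Set U0) (hUusc : UscOn Y U) (hUcomp : ∀ y ∈ Y, IsCompact (U y))
    (f : E m × U0 → E m) (hf : Continuous f)
    (g : E m × U0 → ℝ) (hg : Continuous g)
    (α : ℝ) (hα : α ∈ Set.Ioo (0:ℝ) 1)
    (hA1 : ∀ y ∈ Y, ValphaE Y U f g α y < ⊤ → ∃ yy uu, AdmProc Y U f y yy uu) :
    LowerSemicontinuousOn (fun y => ValphaE Y U f g α y) Y :=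
  stmt1_general Y hYc U hUusc hUcomp f hf g hg α hα

end LPOC
end
end

section
/- For every y0 ∈ Y satisfying Assumption A1 and every α ∈ (0,1), the discounted occupational measure generated by any admissible process from y0 belongs to W_α(y0); that is, Γ_α(y0) ⊂ W_α(y0). Consequently g*_α(y0) ≤ (1−α)V_α(y0). -/
open MeasureTheory Filter Topology Set ENNReal

noncomputable section

namespace LPOC

variable {m : ℕ} {U0 : Type*} [MetricSpace U0]

variable [MeasurableSpace U0] [BorelSpace U0]

/-! Along an admissible process the integrand defining `W_α(y0)` integrates against `γ^α` to
`(1-α) Σ_t α^t (α φ(y(t+1)) - φ(y(t)) + (1-α) φ(y0))`, a telescoping series with value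
`-(1-α) φ(y0) + (1-α) φ(y0) = 0`; the series converge because `φ` is bounded on the compact `Y`.
Since moreover `∫ g dγ^α = (1-α) Σ_t α^t g(y(t),u(t))`, every admissible cost scaled by `1-α` is
a value of the linear program defining `g*_α(y0)`. -/

theorem tsum_discounted_telescope_eq_zero {α : ℝ} (hα0 : 0 ≤ α) (hα1 : α < 1) {b : ℕ → ℝ}
    {C : ℝ} (hb : ∀ t, |b t| ≤ C) :
    ∑' t, (1 - α) * α ^ t * (α * (b (t + 1) - b t) + (1 - α) * (b 0 - b t)) = 0 := by
  have hgeom : Summable (α ^ ·) := summable_geometric_of_lt_one hα0 hα1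
  have hsum : Summable fun t => α ^ t * b t :=
    (hgeom.mul_left C).of_norm_bounded fun t => by
      rw [Real.norm_eq_abs, abs_mul, abs_of_nonneg (pow_nonneg hα0 t), mul_comm]
      exact mul_le_mul_of_nonneg_right (hb t) (pow_nonneg hα0 t)
  have hshift : Summable fun t => α ^ (t + 1) * b (t + 1) :=
    (summable_nat_add_iff 1).2 hsum
  calc ∑' t, (1 - α) * α ^ t * (α * (b (t + 1) - b t) + (1 - α) * (b 0 - b t))
      = ∑' t, ((1 - α) * (α ^ (t + 1) * b (t + 1) - α ^ t * b t)
          + (1 - α) ^ 2 * b 0 * α ^ t) :=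
        tsum_congr fun t => by ring
    _ = (1 - α) * (∑' t, α ^ (t + 1) * b (t + 1) - ∑' t, α ^ t * b t)
          + (1 - α) ^ 2 * b 0 * ∑' t, α ^ t := by
        rw [((hshift.sub hsum).mul_left _).tsum_add (hgeom.mul_left _), tsum_mul_left,
          hshift.tsum_sub hsum, tsum_mul_left]
    _ = 0 := by
        rw [hsum.tsum_eq_zero_add, tsum_geometric_of_lt_one hα0 hα1]
        field_simp [(sub_pos.2 hα1).ne']
        ring

section OccupationalMeasure

variable {m : ℕ} {U0 : Type*} [MeasurableSpace U0] {α : ℝ} {y : ℕ → E m} {u : ℕ → U0}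

theorem isProbabilityMeasure_discOcc (hα0 : 0 ≤ α) (hα1 : α < 1) :
    IsProbabilityMeasure (discOcc α y u) := by
  have hweight : ∀ t : ℕ, 0 ≤ (1 - α) * α ^ t := fun t =>
    mul_nonneg (sub_nonneg.2 hα1.le) (pow_nonneg hα0 t)
  constructor
  simp only [discOcc, Measure.sum_apply _ MeasurableSet.univ, Measure.smul_apply,
    measure_univ, smul_eq_mul, mul_one]
  rw [← ENNReal.ofReal_tsum_of_nonneg hweight
      ((summable_geometric_of_lt_one hα0 hα1).mul_left _),
    tsum_mul_left, tsum_geometric_of_lt_one hα0 hα1, mul_inv_cancel₀ (sub_pos.2 hα1).ne',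
    ENNReal.ofReal_one]

variable [MeasurableSingletonClass U0]

theorem ae_discOcc_mem {S : Set (E m × U0)} (hS : ∀ t, (y t, u t) ∈ S) :
    ∀ᵐ p ∂discOcc α y u, p ∈ S := by
  rw [discOcc, Measure.ae_sum_iff]
  intro t
  refine Measure.ae_smul_measure ?_ _
  rw [ae_dirac_eq]
  exact hS t

-- No integrability is needed: if the series is not summable, both sides are the junk value `0`.
theorem integral_discOcc (hα0 : 0 ≤ α) (hα1 : α ≤ 1) (h : E m × U0 → ℝ) :
    ∫ p, h p ∂discOcc α y u = ∑' t, (1 - α) * α ^ t * h (y t, u t) := by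
  rw [discOcc, integral_sum_dirac fun t => ENNReal.ofReal_ne_top]
  refine tsum_congr fun t => ?_
  rw [ENNReal.toReal_ofReal (mul_nonneg (sub_nonneg.2 hα1) (pow_nonneg hα0 t)), smul_eq_mul]

end OccupationalMeasure

section Admissible

variable {m : ℕ} {U0 : Type*} {Y : Set (E m)} {U : E m → Set U0}
  {f : E m × U0 → E m} {y0 : E m} {y : ℕ → E m} {u : ℕ → U0}

theorem AdmProc.mem_graphG (hadm : AdmProc Y U f y0 y u) (t : ℕ) :
    (y t, u t) ∈ graphG Y U f :=
  ⟨(hadm.2 t).2.1, (hadm.2 t).2.2, (hadm.2 t).1 ▸ (hadm.2 (t + 1)).2.1⟩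

variable [MeasurableSpace U0] {α : ℝ}

theorem discOcc_mem_GammaA (hα0 : 0 ≤ α) (hα1 : α < 1) (hadm : AdmProc Y U f y0 y u) :
    ⟨discOcc α y u, isProbabilityMeasure_discOcc hα0 hα1⟩ ∈ GammaA Y U f α y0 :=
  ⟨y, u, hadm, rfl⟩

variable [MeasurableSingletonClass U0]

theorem integral_discOcc_constraint_eq_zero (hα0 : 0 ≤ α) (hα1 : α < 1)
    (hadm : AdmProc Y U f y0 y u) {φ : E m → ℝ} {C : ℝ} (hφ : ∀ t, |φ (y t)| ≤ C) :
    ∫ p, (α * (φ (f p) - φ p.1) + (1 - α) * (φ y0 - φ p.1)) ∂discOcc α y u = 0 := by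
  rw [integral_discOcc hα0 hα1.le, ← tsum_discounted_telescope_eq_zero hα0 hα1 hφ]
  refine tsum_congr fun t => ?_
  rw [← (hadm.2 t).1, hadm.1]

theorem GammaA_subset_Wa (hYc : IsCompact Y) (hα0 : 0 ≤ α) (hα1 : α < 1) :
    GammaA Y U f α y0 ⊆ Wa Y U f α y0 := by
  rintro γ ⟨y, u, hadm, hγ⟩
  refine ⟨hγ ▸ ae_discOcc_mem hadm.mem_graphG, fun φ hφ => ?_⟩
  rw [hγ]
  obtain ⟨C, hC⟩ := hYc.exists_bound_of_continuousOn hφ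
  exact integral_discOcc_constraint_eq_zero hα0 hα1 hadm fun t => hC _ (hadm.2 t).2.1

end Admissible

section LinearProgram

variable {m : ℕ} {U0 : Type*} [TopologicalSpace U0] [CompactSpace U0] [MeasurableSpace U0]
  {Y : Set (E m)} {U : E m → Set U0} {f : E m × U0 → E m} {g : E m × U0 → ℝ}
  {α : ℝ} {y0 : E m}

theorem bddBelow_integral_Wa (hYc : IsCompact Y) (hg : Continuous g) :
    BddBelow {r : ℝ | ∃ γ ∈ Wa Y U f α y0, r = ∫ p, g p ∂(γ : Measure (E m × U0))} := by
  obtain ⟨C, hC⟩ := (hYc.prod isCompact_univ).exists_bound_of_continuousOn hg.continuousOn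
  refine ⟨-C, ?_⟩
  rintro _ ⟨γ, ⟨hγG, -⟩, rfl⟩
  have hbound : ∀ᵐ p ∂(γ : Measure (E m × U0)), ‖g p‖ ≤ C := by
    filter_upwards [mem_ae_iff.2 hγG] with p hp using hC p ⟨hp.1, Set.mem_univ _⟩
  have := norm_integral_le_of_norm_le_const hbound
  rw [probReal_univ, mul_one, Real.norm_eq_abs] at this
  exact (abs_le.1 this).1

theorem gStarA_le_integral_of_mem_Wa (hYc : IsCompact Y) (hg : Continuous g)
    {γ : ProbabilityMeasure (E m × U0)} (hγ : γ ∈ Wa Y U f α y0) :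
    gStarA Y U f g α y0 ≤ ∫ p, g p ∂(γ : Measure (E m × U0)) :=
  csInf_le (bddBelow_integral_Wa hYc hg) ⟨γ, hγ, rfl⟩

end LinearProgram

theorem stmt7_general {m : ℕ} {U0 : Type*} [MetricSpace U0] [CompactSpace U0]
    [MeasurableSpace U0] [BorelSpace U0]
    (Y : Set (E m)) (hYc : IsCompact Y)
    (U : E m → Set U0)
    (f : E m × U0 → E m)
    (g : E m × U0 → ℝ) (hg : Continuous g)
    (α : ℝ) (hα : α ∈ Set.Ioo (0:ℝ) 1)
    (y0 : E m) (hA1 : ∃ y u, AdmProc Y U f y0 y u) :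
    GammaA Y U f α y0 ⊆ Wa Y U f α y0 ∧
    gStarA Y U f g α y0 ≤ (1 - α) * Valpha Y U f g α y0 := by
  obtain ⟨hα0, hα1⟩ := hα
  have hΓW : GammaA Y U f α y0 ⊆ Wa Y U f α y0 := GammaA_subset_Wa hYc hα0.le hα1
  refine ⟨hΓW, ?_⟩
  have h1α : 0 < 1 - α := sub_pos.2 hα1
  rw [Valpha, ← div_le_iff₀' h1α]
  refine le_csInf (by obtain ⟨y, u, hadm⟩ := hA1; exact ⟨_, y, u, hadm, rfl⟩) ?_
  rintro _ ⟨y, u, hadm, rfl⟩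
  rw [div_le_iff₀' h1α, discountedCost, ← tsum_mul_left]
  calc gStarA Y U f g α y0
      ≤ ∫ p, g p ∂discOcc α y u :=
        gStarA_le_integral_of_mem_Wa hYc hg (hΓW (discOcc_mem_GammaA hα0.le hα1 hadm))
    _ = ∑' t, (1 - α) * (α ^ t * g (y t, u t)) := by
        rw [integral_discOcc hα0.le hα1.le]
        exact tsum_congr fun t => mul_assoc _ _ _

theorem stmt7 {m : ℕ} {U0 : Type*} [MetricSpace U0] [CompactSpace U0]
    [MeasurableSpace U0] [BorelSpace U0]
    (Y : Set (E m)) (hYne : Y.Nonempty) (hYc : IsCompact Y)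
    (U : E m → Set U0) (hUusc : UscOn Y U) (hUcomp : ∀ y ∈ Y, IsCompact (U y))
    (f : E m × U0 → E m) (hf : Continuous f)
    (g : E m × U0 → ℝ) (hg : Continuous g)
    (α : ℝ) (hα : α ∈ Set.Ioo (0:ℝ) 1)
    (y0 : E m) (hy0 : y0 ∈ Y) (hA1 : ∃ y u, AdmProc Y U f y0 y u) :
    GammaA Y U f α y0 ⊆ Wa Y U f α y0 ∧
    gStarA Y U f g α y0 ≤ (1 - α) * Valpha Y U f g α y0 :=
  stmt7_general Y hYc U f g hg α hα y0 hA1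

end LPOC
end
end

section
/- Let g : ℕ → ℝ satisfy |g(t)| ≤ M for all t, let α ∈ (0,1), and set σ := (1−α) Σ_{t=0}^∞ α^t g(t). Then for every ε > 0 there exists a positive integer T with T ≥ ⌊ ε / ((4M + 4|σ| + ε)(−ln α)) ⌋ such that (1/T) Σ_{t=0}^{T−1} g(t) < σ + ε + 2M/T. -/
/-!
Write `S h T = ∑_{t<T} h t` and take `h = g - (σ + ε)`. By the Cauchy product with the geometric
series, `∑ₙ αⁿ S h (n + 1) = (1 - α)⁻¹ ∑ₜ αᵗ h t = -ε / (1 - α)²`. If every partial sum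
`S h T` with `T > k` were nonnegative, only the first `k` terms could contribute negatively, and
since `|S h (n + 1)| ≤ C (n + 1)` with `C = M + |σ| + ε` they contribute at least
`-C ∑_{n<k} (n + 1) αⁿ ≥ -C (1 - αᵏ) / (1 - α)²`. Thus `ε ≤ C (1 - αᵏ)`, which fails as soon as
`1 - αᵏ ≤ ε / (4M + 4|σ| + ε)`; as `αᵏ ≥ 1 + k ln α`, this holds for
`k = ⌊ε / ((4M + 4|σ| + ε)(-ln α))⌋`. Some `T > k` therefore has `∑_{t<T} g t < (σ + ε) T`.
-/

open Finset

theorem hasSum_pow_mul_sum_range_succ {𝕜 : Type*} [NormedField 𝕜] [CompleteSpace 𝕜] {α : 𝕜}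
    (hα : ‖α‖ < 1) {f : ℕ → 𝕜} (hf : Summable fun t => ‖α ^ t * f t‖) :
    HasSum (fun n => α ^ n * ∑ t ∈ range (n + 1), f t) ((1 - α)⁻¹ * ∑' t, α ^ t * f t) := by
  have h := hasSum_sum_range_mul_of_summable_norm hf (summable_norm_geometric_of_norm_lt_one hα)
  rw [tsum_geometric_of_norm_lt_one hα, mul_comm] at h
  convert h using 2 with n
  rw [mul_sum]
  refine sum_congr rfl fun t ht => ?_
  rw [mul_right_comm, pow_mul_pow_sub α (mem_range_succ_iff.1 ht), mul_comm]

theorem one_sub_sq_mul_sum_range_succ_mul_pow {R : Type*} [CommRing R] (α : R) (k : ℕ) :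
    (1 - α) ^ 2 * ∑ n ∈ range k, ((n : R) + 1) * α ^ n = 1 - α ^ k - k * α ^ k * (1 - α) := by
  induction k with
  | zero => simp
  | succ k ih =>
    rw [sum_range_succ, mul_add, ih]
    push_cast
    ring

theorem one_sub_sq_mul_sum_range_succ_mul_pow_le {α : ℝ} (hα0 : 0 ≤ α) (hα1 : α ≤ 1) (k : ℕ) :
    (1 - α) ^ 2 * ∑ n ∈ range k, ((n : ℝ) + 1) * α ^ n ≤ 1 - α ^ k := by
  rw [one_sub_sq_mul_sum_range_succ_mul_pow]
  have : 0 ≤ (k : ℝ) * α ^ k * (1 - α) := by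
    have := sub_nonneg.2 hα1
    positivity
  linarith

theorem one_sub_le_pow_of_mul_neg_log_le {α x : ℝ} (hα : 0 < α) {k : ℕ}
    (hk : k * -Real.log α ≤ x) : 1 - x ≤ α ^ k := by
  calc 1 - x ≤ k * Real.log α + 1 := by linarith
    _ ≤ Real.exp (k * Real.log α) := Real.add_one_le_exp _
    _ = α ^ k := by rw [← Real.log_pow, Real.exp_log (pow_pos hα k)]

theorem summable_norm_pow_mul_of_abs_le {α C : ℝ} (hα0 : 0 ≤ α) (hα1 : α < 1) {f : ℕ → ℝ}
    (hf : ∀ t, |f t| ≤ C) : Summable fun t => ‖α ^ t * f t‖ := by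
  refine .of_nonneg_of_le (fun _ => norm_nonneg _) (fun t => ?_)
    ((summable_geometric_of_lt_one hα0 hα1).mul_right C)
  rw [norm_mul, norm_pow, Real.norm_eq_abs, abs_of_nonneg hα0]
  exact mul_le_mul_of_nonneg_left (hf t) (pow_nonneg hα0 t)

theorem one_sub_mul_tsum_pow_mul_sub_const {α : ℝ} (hα0 : 0 ≤ α) (hα1 : α < 1) {f : ℕ → ℝ}
    (hf : Summable fun t => α ^ t * f t) (c : ℝ) :
    (1 - α) * ∑' t, α ^ t * (f t - c) = (1 - α) * ∑' t, α ^ t * f t - c := by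
  have hgeo := summable_geometric_of_lt_one hα0 hα1
  simp_rw [mul_sub, mul_comm _ c]
  rw [hf.tsum_sub (hgeo.mul_left _), tsum_mul_left, tsum_geometric_of_lt_one hα0 hα1]
  field_simp [(sub_pos.2 hα1).ne']

theorem add_mul_one_sub_pow_lt {α P ε : ℝ} (hα0 : 0 < α) (hα1 : α < 1) (hP : 0 ≤ P)
    (hε : 0 < ε) {k : ℕ} (hk : (k : ℝ) ≤ ε / ((4 * P + ε) * -Real.log α)) :
    (P + ε) * (1 - α ^ k) < ε := by
  have hD : 0 < 4 * P + ε := by positivity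
  have hk' : k * -Real.log α ≤ ε / (4 * P + ε) := by
    rwa [← le_div_iff₀ (neg_pos.2 (Real.log_neg hα0 hα1)), div_div]
  have hD_mul : (1 - α ^ k) * (4 * P + ε) ≤ ε :=
    (le_div_iff₀ hD).1 (by linarith [one_sub_le_pow_of_mul_neg_log_le hα0 hk'])
  -- `4 (ε - (P + ε) (1 - αᵏ)) = 3 ε αᵏ + (ε - (4P + ε) (1 - αᵏ))`
  linarith [mul_pos hε (pow_pos hα0 k)]

theorem exists_lt_sum_range_neg_of_mul_tsum_lt {α C : ℝ} (hα0 : 0 ≤ α) (hα1 : α < 1)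
    {h : ℕ → ℝ} (hh : ∀ t, |h t| ≤ C) (k : ℕ)
    (hlt : (1 - α) * ∑' t, α ^ t * h t < -(C * (1 - α ^ k))) :
    ∃ T, k < T ∧ ∑ t ∈ range T, h t < 0 := by
  by_contra! hnonneg
  have hC : 0 ≤ C := (abs_nonneg _).trans (hh 0)
  have hαn : ‖α‖ < 1 := by rwa [Real.norm_eq_abs, abs_of_nonneg hα0]
  have hpartial : ∀ n : ℕ, -(C * (((n : ℝ) + 1) * α ^ n)) ≤ α ^ n * ∑ t ∈ range (n + 1), h t := by
    intro n
    have hS : -(C * ((n : ℝ) + 1)) ≤ ∑ t ∈ range (n + 1), h t := by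
      have hcard := card_nsmul_le_sum (range (n + 1)) h (-C) fun t _ => neg_le_of_abs_le (hh t)
      simp only [card_range, nsmul_eq_mul, Nat.cast_succ] at hcard
      linarith
    have hmul := mul_le_mul_of_nonneg_left hS (pow_nonneg hα0 n)
    linarith
  have hhead : ∑ n ∈ range k, α ^ n * ∑ t ∈ range (n + 1), h t ≤
      (1 - α)⁻¹ * ∑' t, α ^ t * h t :=
    sum_le_hasSum _ (fun n hn => mul_nonneg (pow_nonneg hα0 n)
      (hnonneg _ (by simpa using hn))) (hasSum_pow_mul_sum_range_succ hαn
        (summable_norm_pow_mul_of_abs_le hα0 hα1 hh))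
  have hlower : -(C * ∑ n ∈ range k, ((n : ℝ) + 1) * α ^ n) ≤
      (1 - α)⁻¹ * ∑' t, α ^ t * h t := by
    rw [mul_sum, ← sum_neg_distrib]
    exact (sum_le_sum fun n _ => hpartial n).trans hhead
  have hweights := one_sub_sq_mul_sum_range_succ_mul_pow_le hα0 hα1.le k
  have hge : -(C * (1 - α ^ k)) ≤ (1 - α) * ∑' t, α ^ t * h t :=
    calc -(C * (1 - α ^ k))
        ≤ -(C * ((1 - α) ^ 2 * ∑ n ∈ range k, ((n : ℝ) + 1) * α ^ n)) := by gcongr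
      _ = (1 - α) ^ 2 * -(C * ∑ n ∈ range k, ((n : ℝ) + 1) * α ^ n) := by ring
      _ ≤ (1 - α) ^ 2 * ((1 - α)⁻¹ * ∑' t, α ^ t * h t) := by gcongr
      _ = (1 - α) * ∑' t, α ^ t * h t := by field_simp
  exact hlt.not_ge hge

/-- Lemma 6.2 (discrete-time analog of Grüne's lemma): if `|g(t)| ≤ M` and
`σ = (1-α) Σ_{t=0}^∞ α^t g(t)`, then for every `ε > 0` there is a positive integer
`T ≥ ⌊ε / ((4M + 4|σ| + ε)(-ln α))⌋` with `(1/T) Σ_{t=0}^{T-1} g(t) < σ + ε + 2M/T`. -/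
theorem stmt16 (g : ℕ → ℝ) (M : ℝ) (hg : ∀ t : ℕ, |g t| ≤ M)
    (α : ℝ) (hα : α ∈ Set.Ioo (0:ℝ) 1)
    (σ : ℝ) (hσ : σ = (1 - α) * ∑' t : ℕ, α ^ t * g t)
    (ε : ℝ) (hε : 0 < ε) :
    ∃ T : ℕ, 0 < T ∧ ⌊ε / ((4 * M + 4 * |σ| + ε) * (-Real.log α))⌋ ≤ (T : ℤ) ∧
      (1 / (T : ℝ)) * ∑ t ∈ Finset.range T, g t < σ + ε + 2 * M / (T : ℝ) := by
  obtain ⟨hα0, hα1⟩ := hα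
  have hM : 0 ≤ M := (abs_nonneg _).trans (hg 0)
  have hx : 0 ≤ ε / ((4 * M + 4 * |σ| + ε) * -Real.log α) :=
    div_nonneg hε.le (mul_nonneg (by positivity) (neg_nonneg.2 (Real.log_nonpos hα0.le hα1.le)))
  set k := ⌊ε / ((4 * M + 4 * |σ| + ε) * -Real.log α)⌋₊
  have hsmall : (M + |σ| + ε) * (1 - α ^ k) < ε :=
    add_mul_one_sub_pow_lt hα0 hα1 (by positivity) hε (by
      rw [mul_add]
      exact Nat.floor_le hx)
  have hdisc : (1 - α) * ∑' t, α ^ t * (g t - (σ + ε)) = -ε := by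
    rw [one_sub_mul_tsum_pow_mul_sub_const hα0.le hα1
      (summable_norm_pow_mul_of_abs_le hα0.le hα1 hg).of_norm, ← hσ]
    ring
  have hbound : ∀ t, |g t - (σ + ε)| ≤ M + |σ| + ε := fun t => by
    linarith [abs_sub (g t) (σ + ε), abs_add_le σ ε, abs_of_pos hε, hg t]
  obtain ⟨T, hkT, hT⟩ :=
    exists_lt_sum_range_neg_of_mul_tsum_lt hα0.le hα1 hbound k (by linarith)
  have hTpos : (0 : ℝ) < T := by exact_mod_cast k.zero_le.trans_lt hkT
  refine ⟨T, by exact_mod_cast hTpos, ?_, ?_⟩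
  · rw [← Int.natCast_floor_eq_floor hx]
    exact_mod_cast hkT.le
  · rw [sum_sub_distrib, sum_const, card_range, nsmul_eq_mul] at hT
    rw [one_div_mul_eq_div, div_lt_iff₀ hTpos, add_mul, div_mul_cancel₀ _ hTpos.ne']
    linarith
end
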